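/- arXiv:2405.07150 — 7 statements merged into one kernel-verified Lean document; each statement's English description precedes it below -/
import Mathlib

section
/- Let 0 < m < 1, r ≥ 1 and let a, b be real numbers with 0 ≤ b ≤ a. Then (a-b)^r ≤ a^r - b^r ≤ 2^{2r/(m+1)-1} · (2r/(m+1)) · (a^{r-(m+1)/2} + b^{r-(m+1)/2}) · (a^{(m+1)/2} - b^{(m+1)/2}). -/
/-!
The lower bound is superadditivity of `t ↦ t ^ r`. For the upper bound put `s = (m + 1) / 2`,
`q = r / s ≥ 1`, `x = a ^ s`, `y = b ^ s`; then `a ^ r - b ^ r = x ^ q - y ^ q`, which the tangent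
line of the convex function `t ↦ t ^ q` at `x` bounds by `q x ^ (q - 1) (x - y)`. The constant
`2 ^ (q - 1) ≥ 1` and the term `y ^ (q - 1) ≥ 0` only weaken this.
-/

namespace Real

/-- Bernoulli's inequality applied to `y / x`. -/
lemma rpow_sub_rpow_le_mul_rpow_mul_sub {x y q : ℝ} (hy : 0 ≤ y) (hyx : y ≤ x) (hq : 1 ≤ q) :
    x ^ q - y ^ q ≤ q * x ^ (q - 1) * (x - y) := by
  obtain rfl | hx := (hy.trans hyx).eq_or_lt
  · obtain rfl := le_antisymm hyx hy
    simp
  set t := y / x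
  have ht : 0 ≤ t := div_nonneg hy hx.le
  have hy_eq : y = t * x := (div_mul_cancel₀ y hx.ne').symm
  have hbern : 1 + q * (t - 1) ≤ t ^ q := by
    simpa using one_add_mul_self_le_rpow_one_add (s := t - 1) (by linarith) hq
  have hxq : x ^ q = x ^ (q - 1) * x := by rw [← rpow_add_one hx.ne', sub_add_cancel]
  calc x ^ q - y ^ q = x ^ q - t ^ q * x ^ q := by rw [hy_eq, mul_rpow ht hx.le]
    _ ≤ x ^ q - (1 + q * (t - 1)) * x ^ q := by gcongr
    _ = q * x ^ (q - 1) * (x - y) := by rw [hy_eq, hxq]; ring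

lemma rpow_sub_rpow_le_two_rpow_mul_add_mul_sub {x y q : ℝ} (hy : 0 ≤ y) (hyx : y ≤ x)
    (hq : 1 ≤ q) :
    x ^ q - y ^ q ≤ 2 ^ (q - 1) * q * (x ^ (q - 1) + y ^ (q - 1)) * (x - y) := by
  have htwo : 1 ≤ (2 : ℝ) ^ (q - 1) := one_le_rpow (by norm_num) (by linarith)
  calc x ^ q - y ^ q ≤ 1 * q * (x ^ (q - 1) + 0) * (x - y) := by
        simpa using rpow_sub_rpow_le_mul_rpow_mul_sub hy hyx hq
    _ ≤ 2 ^ (q - 1) * q * (x ^ (q - 1) + y ^ (q - 1)) * (x - y) := by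
        have hx : 0 ≤ x := hy.trans hyx
        gcongr
        positivity

end Real

open Real in
/-- For `0 < m < 1`, `r ≥ 1` and `0 ≤ b ≤ a`, one has
`(a-b)^r ≤ a^r - b^r ≤ 2^(2r/(m+1)-1) * (2r/(m+1)) * (a^(r-(m+1)/2) + b^(r-(m+1)/2))
  * (a^((m+1)/2) - b^((m+1)/2))`, where powers are real powers. -/
theorem rpow_sub_rpow_bounds (m r a b : ℝ) (hm0 : 0 < m) (hm1 : m < 1) (hr : 1 ≤ r)
    (hb : 0 ≤ b) (hba : b ≤ a) :
    (a - b) ^ r ≤ a ^ r - b ^ r ∧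
      a ^ r - b ^ r ≤ 2 ^ (2 * r / (m + 1) - 1) * (2 * r / (m + 1)) *
        (a ^ (r - (m + 1) / 2) + b ^ (r - (m + 1) / 2)) *
        (a ^ ((m + 1) / 2) - b ^ ((m + 1) / 2)) := by
  have ha : 0 ≤ a := hb.trans hba
  refine ⟨?_, ?_⟩
  · have := add_rpow_le_rpow_add (sub_nonneg.2 hba) hb hr
    rw [sub_add_cancel] at this
    linarith
  · set s := (m + 1) / 2
    have hs : 0 < s := by positivity
    have hs1 : s < 1 := by simp only [s]; linarith
    set q := 2 * r / (m + 1)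
    have hsq : s * q = r := by simp only [s, q]; field_simp
    have hq : 1 ≤ q := by nlinarith
    have hsq1 : s * (q - 1) = r - s := by rw [mul_sub, hsq, mul_one]
    calc a ^ r - b ^ r = (a ^ s) ^ q - (b ^ s) ^ q := by rw [← rpow_mul ha, ← rpow_mul hb, hsq]
      _ ≤ 2 ^ (q - 1) * q * ((a ^ s) ^ (q - 1) + (b ^ s) ^ (q - 1)) * (a ^ s - b ^ s) :=
        rpow_sub_rpow_le_two_rpow_mul_add_mul_sub (rpow_nonneg hb s)
          (rpow_le_rpow hb hba hs.le) hq
      _ = _ := by rw [← rpow_mul ha, ← rpow_mul hb, hsq1]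
end

section
/- (Nash inequality) For every n ≥ 1 there exists a constant C > 0 depending only on n such that for all f : ℝ^n → ℝ with f ∈ L¹(ℝ^n), f ∈ L²(ℝ^n), f differentiable and ∇f ∈ L²(ℝ^n), one has ‖f‖₂^{1+2/n} ≤ C ‖f‖₁^{2/n} ‖∇f‖₂. -/
/-!
Averaging over the translates `x + y`, `y ∈ B(0, R)`, bounds `|f x|` by the mean of `|f|` on
`x + B(0, R)`, which is at most `‖f‖₁ / |B(0, R)|`, plus the oscillation
`⨍_{B(0,R)} |f (x + y) - f x| dy`, whose `L²` norm is at most `R ‖∇f‖₂` by the fundamental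
theorem of calculus along segments. Pairing with `|f|` gives
`‖f‖₂² ≤ ‖f‖₁² / (ω Rⁿ) + R ‖f‖₂ ‖∇f‖₂` for every `R > 0`, and the choice
`R = ‖f‖₂ / (2 ‖∇f‖₂)` yields, with `ω = |B(0, 1)|`, `‖f‖₂^(n+2) ≤ 2^(n+1) ω⁻¹ ‖f‖₁² ‖∇f‖₂ⁿ`.
-/

open MeasureTheory ENNReal Set Metric Filter Topology

theorem pow_add_two_le_of_forall_sq_le {n : ℕ} (hn : n ≠ 0) {ω A B G : ℝ} (hω : 0 < ω)
    (hA : 0 ≤ A) (hG : 0 ≤ G)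
    (h : ∀ R > 0, A ^ 2 ≤ B ^ 2 / (ω * R ^ n) + R * A * G) :
    A ^ (n + 2) ≤ 2 ^ (n + 1) / ω * B ^ 2 * G ^ n := by
  rcases hA.eq_or_lt with rfl | hA
  · rw [zero_pow (by omega)]
    positivity
  rcases hG.eq_or_lt with rfl | hG
  · have hlim : Tendsto (fun R : ℝ => B ^ 2 / (ω * R ^ n) + R * A * 0) atTop (𝓝 0) := by
      simpa using tendsto_const_nhds.div_atTop
        ((tendsto_pow_atTop hn).const_mul_atTop hω)
    have : A ^ 2 ≤ 0 := ge_of_tendsto hlim (eventually_gt_atTop 0 |>.mono h)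
    nlinarith
  have hR := h (A / (2 * G)) (by positivity)
  have hhalf : A / (2 * G) * A * G = A ^ 2 / 2 := by field_simp
  rw [hhalf, div_pow, mul_div_assoc', div_div_eq_mul_div] at hR
  have hsq : A ^ 2 / 2 * (ω * A ^ n) ≤ B ^ 2 * (2 * G) ^ n :=
    (le_div_iff₀ (by positivity)).1 (by linarith)
  calc A ^ (n + 2) = A ^ 2 / 2 * (ω * A ^ n) * (2 / ω) := by field_simp; ring
    _ ≤ B ^ 2 * (2 * G) ^ n * (2 / ω) := by gcongr
    _ = 2 ^ (n + 1) / ω * B ^ 2 * G ^ n := by rw [mul_pow]; field_simp; ring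

theorem rpow_one_add_two_div_le_of_forall_sq_le {n : ℕ} (hn : n ≠ 0) {ω A B G : ℝ} (hω : 0 < ω)
    (hA : 0 ≤ A) (hB : 0 ≤ B) (hG : 0 ≤ G)
    (h : ∀ R > 0, A ^ 2 ≤ B ^ 2 / (ω * R ^ n) + R * A * G) :
    A ^ (1 + 2 / (n : ℝ)) ≤ (2 ^ (n + 1) / ω) ^ (1 / (n : ℝ)) * B ^ (2 / (n : ℝ)) * G := by
  have hn' : (0 : ℝ) < n := by positivity
  calc A ^ (1 + 2 / (n : ℝ)) = (A ^ (n + 2)) ^ (1 / (n : ℝ)) := by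
        rw [← Real.rpow_natCast, ← Real.rpow_mul hA]
        congr 1
        field_simp
        push_cast
        ring
    _ ≤ (2 ^ (n + 1) / ω * B ^ 2 * G ^ n) ^ (1 / (n : ℝ)) := by
        gcongr
        exact pow_add_two_le_of_forall_sq_le hn hω hA hG h
    _ = (2 ^ (n + 1) / ω) ^ (1 / (n : ℝ)) * B ^ (2 / (n : ℝ)) * G := by
        rw [Real.mul_rpow (by positivity) (by positivity),
          Real.mul_rpow (by positivity) (by positivity), ← Real.rpow_natCast B,
          ← Real.rpow_mul hB, ← Real.rpow_natCast G, ← Real.rpow_mul hG,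
          mul_one_div_cancel hn'.ne', Real.rpow_one]
        push_cast
        ring_nf

theorem eLpNorm_two_sq {α ε : Type*} [MeasurableSpace α] [ENorm ε] (μ : Measure α) (f : α → ε) :
    eLpNorm f 2 μ ^ 2 = ∫⁻ x, ‖f x‖ₑ ^ 2 ∂μ := by
  simpa using eLpNorm_nnreal_pow_eq_lintegral (μ := μ) (f := f) (p := 2) two_ne_zero

theorem sq_lintegral_le_lintegral_sq {α : Type*} [MeasurableSpace α] {ν : Measure α}
    [IsProbabilityMeasure ν] {g : α → ℝ≥0∞} (hg : AEMeasurable g ν) :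
    (∫⁻ x, g x ∂ν) ^ 2 ≤ ∫⁻ x, g x ^ 2 ∂ν := by
  have := eLpNorm_le_eLpNorm_of_exponent_le one_le_two hg.aestronglyMeasurable (μ := ν)
  rw [eLpNorm_one_eq_lintegral_enorm] at this
  simpa [eLpNorm_two_sq] using pow_le_pow_left' this 2

theorem lintegral_mul_le_eLpNorm_two_mul {α : Type*} [MeasurableSpace α] {μ : Measure α}
    {f g : α → ℝ≥0∞} (hf : AEMeasurable f μ) (hg : AEMeasurable g μ) :
    ∫⁻ x, f x * g x ∂μ ≤ eLpNorm f 2 μ * eLpNorm g 2 μ := by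
  have := ENNReal.lintegral_mul_le_Lp_mul_Lq μ Real.HolderConjugate.two_two hf hg
  simpa [eLpNorm_eq_lintegral_rpow_enorm_toReal two_ne_zero ofNat_ne_top] using this

theorem enorm_sub_le_lintegral_enorm_deriv {F : Type*} [NormedAddCommGroup F] [NormedSpace ℝ F]
    [CompleteSpace F] {φ : ℝ → F} (hφ : Differentiable ℝ φ) {a b : ℝ} (hab : a ≤ b) :
    ‖φ b - φ a‖ₑ ≤ ∫⁻ t in Ioc a b, ‖deriv φ t‖ₑ := by
  by_cases h : ∫⁻ t in Ioc a b, ‖deriv φ t‖ₑ = ∞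
  · simp [h]
  have hint : IntervalIntegrable (deriv φ) volume a b :=
    (intervalIntegrable_iff_integrableOn_Ioc_of_le hab).2
      ⟨(stronglyMeasurable_deriv φ).aestronglyMeasurable, lt_top_iff_ne_top.2 h⟩
  rw [← intervalIntegral.integral_deriv_eq_sub (fun t _ => hφ t) hint,
    intervalIntegral.integral_of_le hab]
  exact enorm_integral_le_lintegral_enorm _

theorem enorm_le_lintegral_add_lintegral_sub {E F : Type*} [NormedAddCommGroup E]
    [MeasurableSpace E] [OpensMeasurableSpace E] [NormedAddCommGroup F]
    (ν : Measure E) [IsProbabilityMeasure ν] {f : E → F} (hf : Continuous f) (x : E) :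
    ‖f x‖ₑ ≤ ∫⁻ y, ‖f (x + y)‖ₑ ∂ν + ∫⁻ y, ‖f (x + y) - f x‖ₑ ∂ν := by
  calc ‖f x‖ₑ = ∫⁻ _, ‖f x‖ₑ ∂ν := by simp
    _ ≤ ∫⁻ y, ‖f (x + y)‖ₑ + ‖f (x + y) - f x‖ₑ ∂ν := lintegral_mono fun y => by
        simpa using enorm_sub_le (a := f (x + y)) (b := f (x + y) - f x)
    _ = _ := lintegral_add_left (hf.comp (continuous_const_add x)).enorm.measurable _

section

variable {E F : Type*} [NormedAddCommGroup E] [NormedSpace ℝ E]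
  [NormedAddCommGroup F] [NormedSpace ℝ F] [CompleteSpace F]

theorem enorm_sub_sq_le_lintegral_fderiv {f : E → F} (hf : Differentiable ℝ f) (x y : E) :
    ‖f (x + y) - f x‖ₑ ^ 2 ≤ ‖y‖ₑ ^ 2 * ∫⁻ t in Ioc (0 : ℝ) 1, ‖fderiv ℝ f (x + t • y)‖ₑ ^ 2 := by
  set φ : ℝ → F := fun t => f (x + t • y)
  have hφ : ∀ t, HasDerivAt φ (fderiv ℝ f (x + t • y) y) t := fun t =>
    (hf _).hasFDerivAt.comp_hasDerivAt t
      (((hasDerivAt_id t).smul_const y).const_add x |>.congr_deriv (one_smul ℝ y))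
  have hderiv : ∀ t, ‖deriv φ t‖ₑ ≤ ‖y‖ₑ * ‖fderiv ℝ f (x + t • y)‖ₑ := fun t => by
    rw [(hφ t).deriv, mul_comm]
    exact (fderiv ℝ f (x + t • y)).le_opENorm y
  have : IsProbabilityMeasure (volume.restrict (Ioc (0 : ℝ) 1)) := ⟨by simp⟩
  calc ‖f (x + y) - f x‖ₑ ^ 2 = ‖φ 1 - φ 0‖ₑ ^ 2 := by simp [φ]
    _ ≤ (∫⁻ t in Ioc (0 : ℝ) 1, ‖deriv φ t‖ₑ) ^ 2 := by
        gcongr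
        exact enorm_sub_le_lintegral_enorm_deriv (fun t => (hφ t).differentiableAt) zero_le_one
    _ ≤ ∫⁻ t in Ioc (0 : ℝ) 1, ‖deriv φ t‖ₑ ^ 2 :=
        sq_lintegral_le_lintegral_sq (stronglyMeasurable_deriv φ).aestronglyMeasurable.enorm
    _ ≤ ∫⁻ t in Ioc (0 : ℝ) 1, ‖y‖ₑ ^ 2 * ‖fderiv ℝ f (x + t • y)‖ₑ ^ 2 := by
        gcongr with t
        rw [← mul_pow]
        exact pow_le_pow_left' (hderiv t) 2
    _ = ‖y‖ₑ ^ 2 * ∫⁻ t in Ioc (0 : ℝ) 1, ‖fderiv ℝ f (x + t • y)‖ₑ ^ 2 :=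
        lintegral_const_mul' _ _ (by simp)

section

variable [MeasurableSpace E] [BorelSpace E] [SecondCountableTopology E]

theorem lintegral_enorm_sub_translate_sq_le (μ : Measure E) [SFinite μ] [μ.IsAddRightInvariant]
    {f : E → F} (hf : Differentiable ℝ f) (y : E) :
    ∫⁻ x, ‖f (x + y) - f x‖ₑ ^ 2 ∂μ ≤ ‖y‖ₑ ^ 2 * ∫⁻ x, ‖fderiv ℝ f x‖ₑ ^ 2 ∂μ := by
  have hmeas : Measurable fun p : E × ℝ => ‖fderiv ℝ f (p.1 + p.2 • y)‖ₑ ^ 2 :=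
    ((measurable_fderiv ℝ f).comp
      (measurable_fst.add (measurable_snd.smul_const y))).enorm.pow_const 2
  calc ∫⁻ x, ‖f (x + y) - f x‖ₑ ^ 2 ∂μ
      ≤ ∫⁻ x, ‖y‖ₑ ^ 2 * (∫⁻ t in Ioc (0 : ℝ) 1, ‖fderiv ℝ f (x + t • y)‖ₑ ^ 2) ∂μ :=
        lintegral_mono fun x => enorm_sub_sq_le_lintegral_fderiv hf x y
    _ = ‖y‖ₑ ^ 2 * ∫⁻ t in Ioc (0 : ℝ) 1, ∫⁻ x, ‖fderiv ℝ f (x + t • y)‖ₑ ^ 2 ∂μ := by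
        rw [lintegral_const_mul' _ _ (by simp), lintegral_lintegral_swap hmeas.aemeasurable]
    _ = ‖y‖ₑ ^ 2 * ∫⁻ x, ‖fderiv ℝ f x‖ₑ ^ 2 ∂μ := by
        simp_rw [lintegral_add_right_eq_self (fun x => ‖fderiv ℝ f x‖ₑ ^ 2)]
        simp

theorem eLpNorm_lintegral_enorm_sub_le (μ : Measure E) [SFinite μ] [μ.IsAddRightInvariant]
    (ν : Measure E) [IsProbabilityMeasure ν] {r : ℝ≥0∞} (hν : ∀ᵐ y ∂ν, ‖y‖ₑ ≤ r)
    {f : E → F} (hf : Differentiable ℝ f) :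
    eLpNorm (fun x => ∫⁻ y, ‖f (x + y) - f x‖ₑ ∂ν) 2 μ ≤ r * eLpNorm (fderiv ℝ f) 2 μ := by
  have hmeas : Measurable fun p : E × E => ‖f (p.1 + p.2) - f p.1‖ₑ :=
    ((hf.continuous.comp continuous_add).sub (hf.continuous.comp continuous_fst)).enorm.measurable
  refine (ENNReal.pow_le_pow_left_iff two_ne_zero).1 ?_
  rw [mul_pow, eLpNorm_two_sq, eLpNorm_two_sq]
  calc ∫⁻ x, ‖∫⁻ y, ‖f (x + y) - f x‖ₑ ∂ν‖ₑ ^ 2 ∂μ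
      ≤ ∫⁻ x, ∫⁻ y, ‖f (x + y) - f x‖ₑ ^ 2 ∂ν ∂μ :=
        lintegral_mono fun x => sq_lintegral_le_lintegral_sq
          (hmeas.comp measurable_prodMk_left).aemeasurable
    _ = ∫⁻ y, ∫⁻ x, ‖f (x + y) - f x‖ₑ ^ 2 ∂μ ∂ν :=
        lintegral_lintegral_swap (hmeas.pow_const 2).aemeasurable
    _ ≤ ∫⁻ y, r ^ 2 * ∫⁻ x, ‖fderiv ℝ f x‖ₑ ^ 2 ∂μ ∂ν := by
        refine lintegral_mono_ae (hν.mono fun y hy => ?_)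
        grw [lintegral_enorm_sub_translate_sq_le μ hf y, hy]
    _ = r ^ 2 * ∫⁻ x, ‖fderiv ℝ f x‖ₑ ^ 2 ∂μ := by simp

theorem eLpNorm_two_sq_le_of_isProbabilityMeasure (μ : Measure E) [SFinite μ]
    [μ.IsAddLeftInvariant] (ν : Measure E) [IsProbabilityMeasure ν] {c r : ℝ≥0∞} (hνμ : ν ≤ c • μ)
    (hν : ∀ᵐ y ∂ν, ‖y‖ₑ ≤ r) {f : E → F} (hf : Differentiable ℝ f) :
    eLpNorm f 2 μ ^ 2 ≤
      c * eLpNorm f 1 μ ^ 2 + r * eLpNorm f 2 μ * eLpNorm (fderiv ℝ f) 2 μ := by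
  set Q : E → ℝ≥0∞ := fun x => ∫⁻ y, ‖f (x + y) - f x‖ₑ ∂ν
  have hQ : Measurable Q :=
    ((hf.continuous.comp continuous_add).sub (hf.continuous.comp continuous_fst)).enorm.measurable
      |>.lintegral_prod_right'
  have hmean : ∀ x, ∫⁻ y, ‖f (x + y)‖ₑ ∂ν ≤ c * eLpNorm f 1 μ := fun x => by
    calc ∫⁻ y, ‖f (x + y)‖ₑ ∂ν ≤ ∫⁻ y, ‖f (x + y)‖ₑ ∂(c • μ) := lintegral_mono' hνμ le_rfl
      _ = c * eLpNorm f 1 μ := by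
        rw [lintegral_smul_measure, lintegral_add_left_eq_self (fun y => ‖f y‖ₑ),
          eLpNorm_one_eq_lintegral_enorm, smul_eq_mul]
  have hfm : Measurable fun x => ‖f x‖ₑ := hf.continuous.enorm.measurable
  calc eLpNorm f 2 μ ^ 2 = ∫⁻ x, ‖f x‖ₑ * ‖f x‖ₑ ∂μ := by
        rw [eLpNorm_two_sq]
        simp only [sq]
    _ ≤ ∫⁻ x, ‖f x‖ₑ * (c * eLpNorm f 1 μ + Q x) ∂μ := by
        gcongr with x
        grw [enorm_le_lintegral_add_lintegral_sub ν hf.continuous x, hmean x]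
    _ = eLpNorm f 1 μ * (c * eLpNorm f 1 μ) + ∫⁻ x, ‖f x‖ₑ * Q x ∂μ := by
        simp_rw [mul_add]
        rw [lintegral_add_left (hfm.mul_const _), lintegral_mul_const _ hfm,
          eLpNorm_one_eq_lintegral_enorm]
    _ ≤ eLpNorm f 1 μ * (c * eLpNorm f 1 μ) +
          eLpNorm f 2 μ * (r * eLpNorm (fderiv ℝ f) 2 μ) := by
        grw [lintegral_mul_le_eLpNorm_two_mul hfm.aemeasurable hQ.aemeasurable, eLpNorm_enorm,
          eLpNorm_lintegral_enorm_sub_le μ ν hν hf]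
    _ = _ := by ring

end

section

variable [MeasurableSpace E] [BorelSpace E] [FiniteDimensional ℝ E]

theorem eLpNorm_two_sq_le_of_ball (μ : Measure E) [μ.IsAddHaarMeasure] {R : ℝ} (hR : 0 < R)
    {f : E → F} (hf : Differentiable ℝ f) :
    eLpNorm f 2 μ ^ 2 ≤ (μ (ball 0 R))⁻¹ * eLpNorm f 1 μ ^ 2 +
      ENNReal.ofReal R * eLpNorm f 2 μ * eLpNorm (fderiv ℝ f) 2 μ := by
  let ν := (μ (ball 0 R))⁻¹ • μ.restrict (ball 0 R)
  have : IsProbabilityMeasure ν := ⟨by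
    simpa [ν] using ENNReal.inv_mul_cancel (measure_ball_pos μ 0 hR).ne' measure_ball_lt_top.ne⟩
  have hνμ : ν ≤ (μ (ball 0 R))⁻¹ • μ :=
    IsOrderedSMul.smul_le_smul_left _ _ Measure.restrict_le_self _
  have hν : ∀ᵐ y ∂ν, ‖y‖ₑ ≤ ENNReal.ofReal R := by
    refine Measure.ae_smul_measure ?_ _
    filter_upwards [ae_restrict_mem measurableSet_ball] with y hy
    rw [← ofReal_norm]
    exact ENNReal.ofReal_le_ofReal (mem_ball_zero_iff.1 hy).le
  exact eLpNorm_two_sq_le_of_isProbabilityMeasure μ ν hνμ hν hf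

theorem toReal_eLpNorm_two_sq_le [Nontrivial E] (μ : Measure E) [μ.IsAddHaarMeasure]
    {f : E → F} (hf1 : Integrable f μ) (hf2 : MemLp f 2 μ) (hf : Differentiable ℝ f)
    (hDf : MemLp (fderiv ℝ f) 2 μ) {R : ℝ} (hR : 0 < R) :
    (eLpNorm f 2 μ).toReal ^ 2 ≤ (eLpNorm f 1 μ).toReal ^ 2 /
        ((μ (ball 0 1)).toReal * R ^ Module.finrank ℝ E) +
      R * (eLpNorm f 2 μ).toReal * (eLpNorm (fderiv ℝ f) 2 μ).toReal := by
  have hV : (μ (ball 0 R)).toReal = (μ (ball 0 1)).toReal * R ^ Module.finrank ℝ E := by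
    rw [μ.addHaar_ball 0 hR.le, toReal_mul, toReal_ofReal (by positivity), mul_comm]
  have hV0 : μ (ball 0 R) ≠ 0 := (measure_ball_pos μ 0 hR).ne'
  have h1 := (memLp_one_iff_integrable.2 hf1).eLpNorm_ne_top
  have h2 := hf2.eLpNorm_ne_top
  have h3 := hDf.eLpNorm_ne_top
  have := ENNReal.toReal_mono (by finiteness) (eLpNorm_two_sq_le_of_ball μ hR hf)
  rw [toReal_add (by finiteness) (by finiteness)] at this
  simpa [toReal_mul, toReal_pow, toReal_inv, toReal_ofReal hR.le, hV, div_eq_inv_mul] using this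

theorem nash_inequality_of_isAddHaarMeasure [Nontrivial E] (μ : Measure E) [μ.IsAddHaarMeasure]
    {f : E → F} (hf1 : Integrable f μ) (hf2 : MemLp f 2 μ) (hf : Differentiable ℝ f)
    (hDf : MemLp (fderiv ℝ f) 2 μ) :
    (eLpNorm f 2 μ).toReal ^ (1 + 2 / (Module.finrank ℝ E : ℝ)) ≤
      (2 ^ (Module.finrank ℝ E + 1) / (μ (ball 0 1)).toReal) ^ (1 / (Module.finrank ℝ E : ℝ)) *
        (eLpNorm f 1 μ).toReal ^ (2 / (Module.finrank ℝ E : ℝ)) *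
        (eLpNorm (fderiv ℝ f) 2 μ).toReal :=
  rpow_one_add_two_div_le_of_forall_sq_le Module.finrank_pos.ne'
    (toReal_pos (measure_ball_pos μ 0 one_pos).ne' measure_ball_lt_top.ne)
    toReal_nonneg toReal_nonneg toReal_nonneg
    fun _ hR => toReal_eLpNorm_two_sq_le μ hf1 hf2 hf hDf hR

end

end

/-- **Nash inequality.** For every `n ≥ 1` there is a constant `C > 0`, depending only on `n`,
such that for every `f ∈ L¹(ℝⁿ) ∩ L²(ℝⁿ)` which is differentiable with `∇f ∈ L²(ℝⁿ)`, one has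
`‖f‖₂^(1+2/n) ≤ C * ‖f‖₁^(2/n) * ‖∇f‖₂`. -/
theorem nash_inequality (n : ℕ) (hn : 1 ≤ n) :
    ∃ C > 0, ∀ f : EuclideanSpace ℝ (Fin n) → ℝ,
      Integrable f → MemLp f 2 → Differentiable ℝ f →
      MemLp (fun x => ‖fderiv ℝ f x‖) 2 →
      (eLpNorm f 2 volume).toReal ^ (1 + 2 / (n : ℝ)) ≤
        C * (eLpNorm f 1 volume).toReal ^ (2 / (n : ℝ)) *
          (eLpNorm (fun x => ‖fderiv ℝ f x‖) 2 volume).toReal := by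
  have : NeZero n := ⟨by omega⟩
  have hω : 0 < (volume (ball (0 : EuclideanSpace ℝ (Fin n)) 1)).toReal :=
    toReal_pos (measure_ball_pos _ _ one_pos).ne' measure_ball_lt_top.ne
  refine ⟨(2 ^ (n + 1) / (volume (ball (0 : EuclideanSpace ℝ (Fin n)) 1)).toReal) ^ (1 / (n : ℝ)),
    by positivity, fun f hf1 hf2 hf hDf => ?_⟩
  have := nash_inequality_of_isAddHaarMeasure volume hf1 hf2 hf
    ((memLp_norm_iff (measurable_fderiv ℝ f).aestronglyMeasurable).1 hDf)
  rwa [finrank_euclideanSpace_fin, ← eLpNorm_norm (fderiv ℝ f)] at this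
end

section
/- (Cut-off function, gradient estimate) Let n ≥ 1 and R > 0, and define η(x) = exp(1 - R/(2R - |x|)) for x ∈ ℝ^n with R < |x| < 2R. Then there exists a constant C > 0 depending only on n such that for all x with R < |x| < 2R and all 0 < a < 1, ‖∇η(x)‖ ≤ (C/(a² R)) · η(x)^{1-a}. -/
/-! With `t = R / (2R - ‖x‖)` the chain rule gives `‖∇η(x)‖ ≤ η(x) · t² / R` and
`η(x) = e^{1-t}`, so the estimate reduces to the one-variable inequality
`a²t² ≤ 4 e^{a(t-1)}`, i.e. `at ≤ 2 e^{a(t-1)/2}`, which follows from `e^u ≥ 1 + u`. -/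

open Real

theorem mul_le_two_mul_exp {a t : ℝ} (ha : a ≤ 2) : a * t ≤ 2 * exp (a * (t - 1) / 2) := by
  have := add_one_le_exp (a * (t - 1) / 2)
  nlinarith

theorem sq_mul_exp_one_sub_le {a t : ℝ} (ha : 0 < a) (ha2 : a ≤ 2) (ht : 0 ≤ t) :
    t ^ 2 * exp (1 - t) ≤ 4 / a ^ 2 * exp (1 - t) ^ (1 - a) := by
  have hsq : (a * t) ^ 2 ≤ 4 * exp (a * (t - 1)) :=
    calc (a * t) ^ 2 ≤ (2 * exp (a * (t - 1) / 2)) ^ 2 :=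
          pow_le_pow_left₀ (by positivity) (mul_le_two_mul_exp ha2) 2
      _ = 4 * exp (a * (t - 1)) := by
          rw [mul_pow, sq (exp _), ← exp_add, add_halves]; norm_num
  have hsplit : exp (1 - t) ^ (1 - a) = exp (1 - t) * exp (a * (t - 1)) := by
    rw [← exp_mul, ← exp_add]; ring_nf
  rw [hsplit, div_mul_eq_mul_div, le_div_iff₀ (by positivity)]
  nlinarith [exp_pos (1 - t)]

theorem hasDerivAt_exp_one_sub_div_sub {R r : ℝ} (hr : 2 * R - r ≠ 0) :
    HasDerivAt (fun s => exp (1 - R / (2 * R - s)))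
      (exp (1 - R / (2 * R - r)) * -(R / (2 * R - r) ^ 2)) r := by
  have hsub : HasDerivAt (fun s => 2 * R - s) (-1) r := by
    simpa using (hasDerivAt_id r).const_sub (2 * R)
  refine (((hasDerivAt_const r R).fun_div hsub hr).const_sub 1).exp.congr_deriv ?_
  ring

theorem norm_fderiv_comp_norm_le {E : Type*} [NormedAddCommGroup E] [InnerProductSpace ℝ E]
    {g : ℝ → ℝ} {g' : ℝ} {x : E} (hx : x ≠ 0) (hg : HasDerivAt g g' ‖x‖) :
    ‖fderiv ℝ (fun y => g ‖y‖) x‖ ≤ |g'| := by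
  have hnorm : DifferentiableAt ℝ norm x :=
    (contDiffAt_norm ℝ hx (n := 1)).differentiableAt one_ne_zero
  have hcomp : HasFDerivAt (fun y => g ‖y‖) (g' • fderiv ℝ norm x) x :=
    hg.comp_hasFDerivAt x hnorm.hasFDerivAt
  rw [hcomp.fderiv, norm_smul, Real.norm_eq_abs]
  refine mul_le_of_le_one_right (abs_nonneg _) ?_
  simpa using norm_fderiv_le_of_lipschitz ℝ lipschitzWith_one_norm (x₀ := x)

theorem cutoff_gradient_estimate_general (n : ℕ) :
    ∃ C > 0, ∀ R : ℝ, 0 < R → ∀ x : EuclideanSpace ℝ (Fin n),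
      R < ‖x‖ → ‖x‖ < 2 * R → ∀ a : ℝ, 0 < a → a < 1 →
      ‖fderiv ℝ (fun y : EuclideanSpace ℝ (Fin n) =>
          Real.exp (1 - R / (2 * R - ‖y‖))) x‖ ≤
        C / (a ^ 2 * R) * Real.exp (1 - R / (2 * R - ‖x‖)) ^ (1 - a) := by
  refine ⟨4, by norm_num, fun R hR x hx1 hx2 a ha0 ha1 => ?_⟩
  have hx : x ≠ 0 := norm_pos_iff.mp (hR.trans hx1)
  have hd : 0 < 2 * R - ‖x‖ := by linarith
  refine (norm_fderiv_comp_norm_le hx (hasDerivAt_exp_one_sub_div_sub hd.ne')).trans ?_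
  set t := R / (2 * R - ‖x‖)
  have hgrad : |exp (1 - t) * -(R / (2 * R - ‖x‖) ^ 2)| = t ^ 2 * exp (1 - t) / R := by
    rw [abs_mul, abs_neg, abs_of_pos (exp_pos _), abs_of_pos (by positivity)]
    simp only [t]
    field_simp
  rw [hgrad, div_le_iff₀ hR, div_mul_eq_div_div, div_mul_eq_mul_div, div_mul_cancel₀ _ hR.ne']
  exact sq_mul_exp_one_sub_le ha0 (by linarith) (by positivity)

/-- **Cut-off function, gradient estimate.** Let `n ≥ 1` and `R > 0`, and let
`η(x) = exp(1 - R/(2R - ‖x‖))` on the annulus `R < ‖x‖ < 2R` in `ℝⁿ`. There exists a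
constant `C > 0` depending only on `n` such that for all `x` in the annulus and all
`0 < a < 1`, `‖∇η(x)‖ ≤ C/(a²R) * η(x)^(1-a)`. -/
theorem cutoff_gradient_estimate (n : ℕ) (hn : 1 ≤ n) :
    ∃ C > 0, ∀ R : ℝ, 0 < R → ∀ x : EuclideanSpace ℝ (Fin n),
      R < ‖x‖ → ‖x‖ < 2 * R → ∀ a : ℝ, 0 < a → a < 1 →
      ‖fderiv ℝ (fun y : EuclideanSpace ℝ (Fin n) =>
          Real.exp (1 - R / (2 * R - ‖y‖))) x‖ ≤
        C / (a ^ 2 * R) * Real.exp (1 - R / (2 * R - ‖x‖)) ^ (1 - a) :=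
  cutoff_gradient_estimate_general n
end

section
/- (Cut-off function, Laplacian estimate) Let n ≥ 1 and R > 0, and define η(x) = exp(1 - R/(2R - |x|)) for x ∈ ℝ^n with R < |x| < 2R. Then there exists a constant C > 0 depending only on n such that for all x with R < |x| < 2R and all 0 < a < 1, |Δη(x)| ≤ (C/(a⁴ R²)) · η(x)^{1-a}. -/
/-!
η is radial, η(x) = f(‖x‖) with f(r) = exp(1 - R/(2R - r)), so Δη = f'' + (n - 1) f'/r; this is
obtained by writing η = φ(‖x‖²) with φ(s) = f(√s), whose partial derivatives are elementary.
With d = 2R - r one has f' = -(R/d²) f and f'' = (R²/d⁴ - 2R/d³) f, and since d < R < r every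
term is at most a multiple of (R/d)⁴ f / R². Finally f = f^(1-a) f^a with
f^a = exp(a(1 - R/d)) ≤ e·exp(-aR/d), and t⁴ e^(-at) ≤ 4!/a⁴ absorbs the factor (R/d)⁴.
-/

open Real Filter Topology

theorem hasFDerivAt_comp_norm_sq {F : Type*} [NormedAddCommGroup F] [InnerProductSpace ℝ F]
    {φ : ℝ → ℝ} {d : ℝ} {y : F} (h : HasDerivAt φ d (‖y‖ ^ 2)) :
    HasFDerivAt (fun z : F => φ (‖z‖ ^ 2)) (d • 2 • innerSL ℝ y) y :=
  h.comp_hasFDerivAt y (hasStrictFDerivAt_norm_sq y).hasFDerivAt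

section RadialLaplacian

variable {ι : Type*} [Fintype ι] [DecidableEq ι]

theorem fderiv_comp_norm_sq_single {φ : ℝ → ℝ} {d : ℝ} {y : EuclideanSpace ℝ ι}
    (h : HasDerivAt φ d (‖y‖ ^ 2)) (i : ι) :
    fderiv ℝ (fun z : EuclideanSpace ℝ ι => φ (‖z‖ ^ 2)) y (EuclideanSpace.single i 1)
      = 2 * d * y i := by
  simp only [(hasFDerivAt_comp_norm_sq h).fderiv, smul_apply, coe_innerSL_apply,
    EuclideanSpace.inner_single_right, ringHom_apply, one_mul, nsmul_eq_mul, Nat.cast_ofNat,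
    smul_eq_mul]
  ring

theorem sum_fderiv_fderiv_comp_norm_sq {φ φ' : ℝ → ℝ} {φ'' : ℝ} {x : EuclideanSpace ℝ ι}
    (hφ : ∀ᶠ s in 𝓝 (‖x‖ ^ 2), HasDerivAt φ (φ' s) s) (hφ' : HasDerivAt φ' φ'' (‖x‖ ^ 2)) :
    ∑ i, fderiv ℝ (fun y => fderiv ℝ (fun z : EuclideanSpace ℝ ι => φ (‖z‖ ^ 2)) y
        (EuclideanSpace.single i 1)) x (EuclideanSpace.single i 1)
      = 2 * Fintype.card ι * φ' (‖x‖ ^ 2) + 4 * ‖x‖ ^ 2 * φ'' := by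
  have hnear : ∀ᶠ y in 𝓝 x, HasDerivAt φ (φ' (‖y‖ ^ 2)) (‖y‖ ^ 2) :=
    ((continuous_norm.pow 2).tendsto x).eventually hφ
  have hsecond (i : ι) :
      fderiv ℝ (fun y => fderiv ℝ (fun z : EuclideanSpace ℝ ι => φ (‖z‖ ^ 2)) y
        (EuclideanSpace.single i 1)) x (EuclideanSpace.single i 1)
        = 4 * φ'' * x i ^ 2 + 2 * φ' (‖x‖ ^ 2) := by
    have hfirst : (fun y => fderiv ℝ (fun z : EuclideanSpace ℝ ι => φ (‖z‖ ^ 2)) y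
        (EuclideanSpace.single i 1)) =ᶠ[𝓝 x] fun y => 2 * φ' (‖y‖ ^ 2) * y i :=
      hnear.mono fun y hy => fderiv_comp_norm_sq_single hy i
    have hprod : HasFDerivAt (fun y : EuclideanSpace ℝ ι => 2 * φ' (‖y‖ ^ 2) * y i) _ x :=
      ((hasFDerivAt_comp_norm_sq hφ').const_mul 2).mul
        (EuclideanSpace.proj i : EuclideanSpace ℝ ι →L[ℝ] ℝ).hasFDerivAt
    rw [hfirst.fderiv_eq, hprod.fderiv]
    simp only [add_apply, smul_apply, PiLp.proj_apply, PiLp.single_eq_same, smul_eq_mul, mul_one,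
      coe_innerSL_apply, EuclideanSpace.inner_single_right, ringHom_apply, one_mul, nsmul_eq_mul,
      Nat.cast_ofNat]
    ring
  rw [Finset.sum_congr rfl fun i _ => hsecond i, Finset.sum_add_distrib, ← Finset.mul_sum,
    ← EuclideanSpace.real_norm_sq_eq, Finset.sum_const, Finset.card_univ, nsmul_eq_mul]
  ring

theorem sum_fderiv_fderiv_comp_norm {f f' : ℝ → ℝ} {f'' : ℝ} {x : EuclideanSpace ℝ ι}
    (hx : x ≠ 0) (hf : ∀ᶠ r in 𝓝 ‖x‖, HasDerivAt f (f' r) r) (hf' : HasDerivAt f' f'' ‖x‖) :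
    ∑ i, fderiv ℝ (fun y => fderiv ℝ (fun z : EuclideanSpace ℝ ι => f ‖z‖) y
        (EuclideanSpace.single i 1)) x (EuclideanSpace.single i 1)
      = f'' + (Fintype.card ι - 1) / ‖x‖ * f' ‖x‖ := by
  have hr : 0 < ‖x‖ := norm_pos_iff.2 hx
  have hsqrt : √(‖x‖ ^ 2) = ‖x‖ := sqrt_sq hr.le
  have hnear : ∀ᶠ s in 𝓝 (‖x‖ ^ 2), 0 < s ∧ HasDerivAt f (f' √s) √s :=
    (lt_mem_nhds (by positivity)).and
      ((continuous_sqrt.tendsto _).eventually (hsqrt ▸ hf))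
  have hφ : ∀ᶠ s in 𝓝 (‖x‖ ^ 2), HasDerivAt (fun s => f √s) (f' √s / (2 * √s)) s :=
    hnear.mono fun s ⟨hs, hfs⟩ =>
      (hfs.comp s (hasDerivAt_sqrt hs.ne')).congr_deriv (mul_one_div _ _)
  have hφ' := ((hsqrt ▸ hf').comp (‖x‖ ^ 2) (hasDerivAt_sqrt (by positivity))).div
    ((hasDerivAt_sqrt (by positivity)).const_mul 2) (by positivity)
  have hcomp : (fun z : EuclideanSpace ℝ ι => f ‖z‖) = fun z => f √(‖z‖ ^ 2) := by
    simp only [sqrt_sq (norm_nonneg _)]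
  rw [hcomp, sum_fderiv_fderiv_comp_norm_sq hφ hφ', Function.comp_apply, hsqrt]
  field_simp
  ring

end RadialLaplacian

section Cutoff

variable {R r : ℝ}

theorem hasDerivAt_cutoff (h : r ≠ 2 * R) :
    HasDerivAt (fun r => exp (1 - R / (2 * R - r)))
      (-(R / (2 * R - r) ^ 2) * exp (1 - R / (2 * R - r))) r := by
  have hd : 2 * R - r ≠ 0 := sub_ne_zero.2 h.symm
  refine (((hasDerivAt_const r R).div ((hasDerivAt_id r).const_sub (2 * R)) hd).const_sub 1).exp
    |>.congr_deriv ?_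
  simp only [Pi.div_apply, id]
  ring

theorem hasDerivAt_cutoff_deriv (h : r ≠ 2 * R) :
    HasDerivAt (fun r => -(R / (2 * R - r) ^ 2) * exp (1 - R / (2 * R - r)))
      ((R ^ 2 / (2 * R - r) ^ 4 - 2 * R / (2 * R - r) ^ 3) * exp (1 - R / (2 * R - r))) r := by
  have hd : 2 * R - r ≠ 0 := sub_ne_zero.2 h.symm
  refine ((hasDerivAt_const r R).div (((hasDerivAt_id r).const_sub (2 * R)).pow 2)
    (pow_ne_zero 2 hd)).neg.mul (hasDerivAt_cutoff h) |>.congr_deriv ?_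
  simp only [Pi.neg_apply, Pi.div_apply, Pi.pow_apply, id]
  field_simp
  ring

theorem abs_cutoff_radial_laplacian_le {d m : ℝ} (hd : 0 < d) (hdR : d ≤ R) (hRr : R ≤ r) :
    |R ^ 2 / d ^ 4 - 2 * R / d ^ 3 - m / r * (R / d ^ 2)| ≤ (3 + |m|) * (R ^ 2 / d ^ 4) := by
  have hR : 0 < R := hd.trans_le hdR
  have hr : 0 < r := hR.trans_le hRr
  have hB : 2 * R / d ^ 3 ≤ 2 * (R ^ 2 / d ^ 4) := by
    rw [show 2 * R / d ^ 3 = 2 * (R ^ 2 / d ^ 4) * (d / R) by field_simp]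
    exact mul_le_of_le_one_right (by positivity) ((div_le_one hR).2 hdR)
  have hC : |m / r * (R / d ^ 2)| ≤ |m| * (R ^ 2 / d ^ 4) := by
    rw [show m / r * (R / d ^ 2) = m * (R ^ 2 / d ^ 4 * (d ^ 2 / (R * r))) by field_simp,
      abs_mul, abs_of_nonneg (by positivity : 0 ≤ R ^ 2 / d ^ 4 * (d ^ 2 / (R * r)))]
    gcongr
    refine mul_le_of_le_one_right (by positivity) ((div_le_one (by positivity)).2 ?_)
    nlinarith
  calc |R ^ 2 / d ^ 4 - 2 * R / d ^ 3 - m / r * (R / d ^ 2)|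
      ≤ |R ^ 2 / d ^ 4| + |2 * R / d ^ 3| + |m / r * (R / d ^ 2)| :=
        (abs_sub _ _).trans (add_le_add_left (abs_sub _ _) _)
    _ ≤ (3 + |m|) * (R ^ 2 / d ^ 4) := by
        rw [abs_of_nonneg (by positivity), abs_of_nonneg (by positivity)]
        linarith

end Cutoff

theorem pow_mul_exp_neg_mul_le {t a : ℝ} (ht : 0 ≤ t) (ha : 0 < a) (k : ℕ) :
    t ^ k * exp (-(a * t)) ≤ k.factorial / a ^ k := by
  have := pow_div_factorial_le_exp (a * t) (by positivity) k
  rw [exp_neg, ← div_eq_mul_inv, div_le_div_iff₀ (exp_pos _) (by positivity)]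
  rw [div_le_iff₀ (by positivity), mul_pow] at this
  linarith

theorem pow_mul_exp_one_sub_rpow_le {t a : ℝ} (ht : 0 ≤ t) (ha : 0 < a) (ha1 : a ≤ 1) :
    t ^ 4 * exp (1 - t) ^ a ≤ 24 * exp 1 / a ^ 4 := by
  have hsplit : exp (1 - t) ^ a = exp a * exp (-(a * t)) := by
    rw [← exp_mul, ← exp_add]; ring_nf
  calc t ^ 4 * exp (1 - t) ^ a = exp a * (t ^ 4 * exp (-(a * t))) := by rw [hsplit]; ring
    _ ≤ exp 1 * (Nat.factorial 4 / a ^ 4) := by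
        gcongr
        exact pow_mul_exp_neg_mul_le ht ha 4
    _ = 24 * exp 1 / a ^ 4 := by norm_num [Nat.factorial]; ring

theorem cutoff_laplacian_estimate_general (n : ℕ) :
    ∃ C > 0, ∀ R : ℝ, 0 < R → ∀ x : EuclideanSpace ℝ (Fin n),
      R < ‖x‖ → ‖x‖ < 2 * R → ∀ a : ℝ, 0 < a → a < 1 →
      |∑ i : Fin n,
          fderiv ℝ (fun y : EuclideanSpace ℝ (Fin n) =>
              fderiv ℝ (fun z : EuclideanSpace ℝ (Fin n) =>
                  Real.exp (1 - R / (2 * R - ‖z‖))) y (EuclideanSpace.single i 1))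
            x (EuclideanSpace.single i 1)| ≤
        C / (a ^ 4 * R ^ 2) * Real.exp (1 - R / (2 * R - ‖x‖)) ^ (1 - a) := by
  refine ⟨24 * exp 1 * (3 + |(n : ℝ) - 1|), by positivity, ?_⟩
  intro R hR x hx1 hx2 a ha0 ha1
  have hx : x ≠ 0 := norm_pos_iff.1 (hR.trans hx1)
  rw [sum_fderiv_fderiv_comp_norm hx
    ((eventually_ne_nhds hx2.ne).mono fun r hr => hasDerivAt_cutoff hr)
    (hasDerivAt_cutoff_deriv hx2.ne), Fintype.card_fin]
  set d := 2 * R - ‖x‖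
  set η := exp (1 - R / d)
  have hd : 0 < d := by linarith
  have hη : 0 < η := exp_pos _
  calc |(R ^ 2 / d ^ 4 - 2 * R / d ^ 3) * η + (n - 1) / ‖x‖ * (-(R / d ^ 2) * η)|
      = |(R ^ 2 / d ^ 4 - 2 * R / d ^ 3 - (n - 1) / ‖x‖ * (R / d ^ 2)) * η| := by ring_nf
    _ = |R ^ 2 / d ^ 4 - 2 * R / d ^ 3 - (n - 1) / ‖x‖ * (R / d ^ 2)| * η := by
        rw [abs_mul, abs_of_pos hη]
    _ ≤ (3 + |(n : ℝ) - 1|) * (R ^ 2 / d ^ 4) * η := by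
        gcongr
        exact abs_cutoff_radial_laplacian_le hd (by linarith) hx1.le
    _ = (3 + |(n : ℝ) - 1|) / R ^ 2 * ((R / d) ^ 4 * η ^ a) * η ^ (1 - a) := by
        have hsplit : η = η ^ a * η ^ (1 - a) := by
          rw [← rpow_add hη, add_sub_cancel, rpow_one]
        nth_rw 1 [hsplit]
        field_simp
    _ ≤ (3 + |(n : ℝ) - 1|) / R ^ 2 * (24 * exp 1 / a ^ 4) * η ^ (1 - a) := by
        gcongr
        exact pow_mul_exp_one_sub_rpow_le (by positivity) ha0 ha1.le
    _ = 24 * exp 1 * (3 + |(n : ℝ) - 1|) / (a ^ 4 * R ^ 2) * η ^ (1 - a) := by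
        ring

/-- **Cut-off function, Laplacian estimate.** Let `n ≥ 1` and `R > 0`, and let
`η(x) = exp(1 - R/(2R - ‖x‖))` on the annulus `R < ‖x‖ < 2R` in `ℝⁿ`. There exists a
constant `C > 0` depending only on `n` such that for all `x` in the annulus and all
`0 < a < 1`, `|Δη(x)| ≤ C/(a⁴R²) * η(x)^(1-a)`, where the Laplacian is the trace of the
second derivative, written as the sum of the repeated second directional derivatives
along the standard basis vectors. -/
theorem cutoff_laplacian_estimate (n : ℕ) (hn : 1 ≤ n) :
    ∃ C > 0, ∀ R : ℝ, 0 < R → ∀ x : EuclideanSpace ℝ (Fin n),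
      R < ‖x‖ → ‖x‖ < 2 * R → ∀ a : ℝ, 0 < a → a < 1 →
      |∑ i : Fin n,
          fderiv ℝ (fun y : EuclideanSpace ℝ (Fin n) =>
              fderiv ℝ (fun z : EuclideanSpace ℝ (Fin n) =>
                  Real.exp (1 - R / (2 * R - ‖z‖))) y (EuclideanSpace.single i 1))
            x (EuclideanSpace.single i 1)| ≤
        C / (a ^ 4 * R ^ 2) * Real.exp (1 - R / (2 * R - ‖x‖)) ^ (1 - a) :=
  cutoff_laplacian_estimate_general n
end

section
/- (Generalized Shannon's inequality) Let n ≥ 2 and n/(n+2) < m < 1, and set σ = n(1-m)/(2m). Then there exists a constant C > 0 depending only on n such that for every f : ℝ^n → ℝ with f ∈ L¹(ℝ^n) and |x|² f(x) ∈ L¹(ℝ^n), one has ∫_{ℝ^n} |f(x)|^m dx ≤ C ‖f‖₁^{m(1-σ)} (∫_{ℝ^n} |x|² |f(x)| dx)^{mσ}. -/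
/-!
For `λ > 0`, Hölder's inequality with exponents `1/m` and `1/(1-m)` applied to
`|f|^m = (|f| (λ + |x|²))^m · (λ + |x|²)^(-m)` gives
`∫ |f|^m ≤ (λ ‖f‖₁ + ∫ |x|² |f|)^m (∫ (λ + |x|²)^(-m/(1-m)))^(1-m)`.
The last integral is finite exactly because `m > n/(n+2)`, and by scaling it is
`λ^(n/2 - m/(1-m))` times its value at `λ = 1`. The choice `λ = ∫ |x|² |f| / ‖f‖₁` balances the
two terms and gives the inequality with `C = 2^m (∫ (1 + |x|²)^(-m/(1-m)))^(1-m)`.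
-/

open MeasureTheory Real Module

theorem MeasureTheory.Integrable.memLp_rpow_of_nonneg {α : Type*} [MeasurableSpace α]
    {μ : Measure α} {f : α → ℝ} (hf : Integrable f μ) (hf0 : 0 ≤ f) {a : ℝ} (ha : 0 < a) :
    MemLp (fun x => f x ^ a) (ENNReal.ofReal (1 / a)) μ := by
  have h := (memLp_one_iff_integrable.2 hf).norm_rpow_div (ENNReal.ofReal a)
  rw [ENNReal.toReal_ofReal ha.le, one_div, ← ENNReal.ofReal_inv_of_pos ha, ← one_div] at h
  simpa only [Real.norm_of_nonneg (hf0 _)] using h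

section

variable {α : Type*} [MeasurableSpace α] {μ : Measure α}

theorem integral_rpow_mul_rpow_le_of_nonneg {f g : α → ℝ} (hf0 : 0 ≤ f) (hg0 : 0 ≤ g)
    (hf : Integrable f μ) (hg : Integrable g μ) {a : ℝ} (ha0 : 0 < a) (ha1 : a < 1) :
    ∫ x, f x ^ a * g x ^ (1 - a) ∂μ ≤ (∫ x, f x ∂μ) ^ a * (∫ x, g x ∂μ) ^ (1 - a) := by
  have hb0 : 0 < 1 - a := sub_pos.2 ha1
  have hpq : (1 / a).HolderConjugate (1 / (1 - a)) := by
    rw [Real.holderConjugate_iff, one_div, one_div, inv_inv, inv_inv, one_lt_inv₀ ha0]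
    exact ⟨ha1, by ring⟩
  have h := integral_mul_le_Lp_mul_Lq_of_nonneg hpq
    (ae_of_all _ fun x => rpow_nonneg (hf0 x) a) (ae_of_all _ fun x => rpow_nonneg (hg0 x) _)
    (hf.memLp_rpow_of_nonneg hf0 ha0) (hg.memLp_rpow_of_nonneg hg0 hb0)
  simpa only [← rpow_mul (hf0 _), ← rpow_mul (hg0 _), mul_one_div_cancel ha0.ne',
    mul_one_div_cancel hb0.ne', rpow_one, one_div_one_div] using h

theorem integral_abs_rpow_le_of_weight {f w : α → ℝ} (hw : ∀ x, 0 < w x) {m : ℝ} (hm0 : 0 < m)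
    (hm1 : m < 1) (hfw : Integrable (fun x => |f x| * w x) μ)
    (hw' : Integrable (fun x => w x ^ (-(m / (1 - m)))) μ) :
    ∫ x, |f x| ^ m ∂μ ≤
      (∫ x, |f x| * w x ∂μ) ^ m * (∫ x, w x ^ (-(m / (1 - m))) ∂μ) ^ (1 - m) := by
  have hweight (x : α) : (|f x| * w x) ^ m * (w x ^ (-(m / (1 - m)))) ^ (1 - m) = |f x| ^ m := by
    rw [← rpow_mul (hw x).le, neg_mul, div_mul_cancel₀ m (sub_pos.2 hm1).ne',
      mul_rpow (abs_nonneg _) (hw x).le, mul_assoc, ← rpow_add (hw x), add_neg_cancel,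
      rpow_zero, mul_one]
  simp_rw [← hweight]
  exact integral_rpow_mul_rpow_le_of_nonneg (fun x => mul_nonneg (abs_nonneg _) (hw x).le)
    (fun x => (rpow_pos_of_pos (hw x) _).le) hfw hw' hm0 hm1

theorem integral_mul_abs_pos {g f : α → ℝ} (hg : ∀ᵐ x ∂μ, 0 < g x)
    (hgf : Integrable (fun x => g x * |f x|) μ) (hf : ¬f =ᵐ[μ] 0) :
    0 < ∫ x, g x * |f x| ∂μ := by
  have hgf0 : 0 ≤ᵐ[μ] fun x => g x * |f x| := by
    filter_upwards [hg] with x hx using mul_nonneg hx.le (abs_nonneg _)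
  refine (integral_nonneg_of_ae hgf0).lt_of_ne fun h => hf ?_
  filter_upwards [(integral_eq_zero_iff_of_nonneg_ae hgf0 hgf).1 h.symm, hg] with x hx hgx
  simpa [hgx.ne'] using hx

end

theorem add_norm_sq_rpow_neg_eq {E : Type*} [SeminormedAddCommGroup E] [NormedSpace ℝ E]
    {l : ℝ} (hl : 0 < l) (p : ℝ) (x : E) :
    (l + ‖x‖ ^ 2) ^ (-p) = l ^ (-p) * (1 + ‖(√l)⁻¹ • x‖ ^ 2) ^ (-p) := by
  have hscale : 1 + ‖(√l)⁻¹ • x‖ ^ 2 = (l + ‖x‖ ^ 2) / l := by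
    rw [norm_smul, norm_inv, norm_of_nonneg (sqrt_nonneg l), mul_pow, inv_pow, sq_sqrt hl.le]
    field_simp
  rw [hscale, div_rpow (by positivity) hl.le, rpow_neg hl.le, mul_div_cancel₀]
  exact inv_ne_zero (rpow_pos_of_pos hl p).ne'

section

variable {E : Type*} [NormedAddCommGroup E] [NormedSpace ℝ E] [FiniteDimensional ℝ E]
  [MeasurableSpace E] [BorelSpace E] (μ : Measure E) [μ.IsAddHaarMeasure]

theorem integrable_add_norm_sq_rpow_neg {l p : ℝ} (hl : 0 < l) (hp : (finrank ℝ E : ℝ) < 2 * p) :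
    Integrable (fun x : E => (l + ‖x‖ ^ 2) ^ (-p)) μ := by
  have h := integrable_rpow_neg_one_add_norm_sq (μ := μ) hp
  rw [neg_div, mul_div_cancel_left₀ p two_ne_zero] at h
  simp_rw [add_norm_sq_rpow_neg_eq hl p]
  exact ((h.comp_smul (inv_ne_zero (sqrt_pos.2 hl).ne')).const_mul _)

theorem integral_add_norm_sq_rpow_neg {l : ℝ} (hl : 0 < l) (p : ℝ) :
    ∫ x : E, (l + ‖x‖ ^ 2) ^ (-p) ∂μ =
      l ^ ((finrank ℝ E : ℝ) / 2 - p) * ∫ x : E, (1 + ‖x‖ ^ 2) ^ (-p) ∂μ := by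
  have hsqrt : √l ^ finrank ℝ E = l ^ ((finrank ℝ E : ℝ) / 2) := by
    rw [sqrt_eq_rpow, ← rpow_natCast, ← rpow_mul hl.le, one_div_mul_eq_div]
  simp_rw [add_norm_sq_rpow_neg_eq hl p]
  rw [integral_const_mul, Measure.integral_comp_inv_smul μ (fun y : E => (1 + ‖y‖ ^ 2) ^ (-p)),
    hsqrt, abs_of_pos (rpow_pos_of_pos hl _), smul_eq_mul, ← mul_assoc, ← rpow_add hl,
    neg_add_eq_sub]

theorem integral_one_add_norm_sq_rpow_neg_pos {p : ℝ} (hp : (finrank ℝ E : ℝ) < 2 * p) :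
    0 < ∫ x : E, (1 + ‖x‖ ^ 2) ^ (-p) ∂μ := by
  refine integral_pos_of_integrable_nonneg_nonzero (x := 0) ?_
    (integrable_add_norm_sq_rpow_neg μ one_pos hp) (fun x => rpow_nonneg (by positivity) _)
    (by simp)
  exact Continuous.rpow_const (by fun_prop) fun x => Or.inl (by positivity)

theorem integral_abs_rpow_le_of_integral_pos {m : ℝ} (hm0 : 0 < m) (hm1 : m < 1)
    (hp : (finrank ℝ E : ℝ) < 2 * (m / (1 - m))) {f : E → ℝ} (hf : Integrable f μ)
    (hf2 : Integrable (fun x => ‖x‖ ^ 2 * |f x|) μ) (hA : 0 < ∫ x, |f x| ∂μ)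
    (hM : 0 < ∫ x, ‖x‖ ^ 2 * |f x| ∂μ) :
    ∫ x, |f x| ^ m ∂μ ≤
      2 ^ m * (∫ x : E, (1 + ‖x‖ ^ 2) ^ (-(m / (1 - m))) ∂μ) ^ (1 - m) *
        (∫ x, |f x| ∂μ) ^ (m - finrank ℝ E * (1 - m) / 2) *
        (∫ x, ‖x‖ ^ 2 * |f x| ∂μ) ^ (finrank ℝ E * (1 - m) / 2) := by
  set A := ∫ x, |f x| ∂μ
  set M := ∫ x, ‖x‖ ^ 2 * |f x| ∂μ
  set d : ℝ := (finrank ℝ E : ℝ)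
  set p := m / (1 - m)
  have hl : 0 < M / A := div_pos hM hA
  have hsplit : (fun x => |f x| * (M / A + ‖x‖ ^ 2)) =
      fun x => M / A * |f x| + ‖x‖ ^ 2 * |f x| := by
    ext x; ring
  have hfw_int : Integrable (fun x => |f x| * (M / A + ‖x‖ ^ 2)) μ := by
    rw [hsplit]; exact (hf.abs.const_mul _).add hf2
  have hfw : ∫ x, |f x| * (M / A + ‖x‖ ^ 2) ∂μ = 2 * M := by
    rw [hsplit, integral_add (hf.abs.const_mul _) hf2, integral_const_mul,
      div_mul_cancel₀ M hA.ne']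
    ring
  have hexp : (d / 2 - p) * (1 - m) = d * (1 - m) / 2 - m := by
    rw [sub_mul, div_mul_cancel₀ m (sub_pos.2 hm1).ne']; ring
  have hM_split : M ^ (d * (1 - m) / 2) = M ^ m * M ^ (d * (1 - m) / 2 - m) := by
    rw [← rpow_add hM, add_sub_cancel]
  calc ∫ x, |f x| ^ m ∂μ
      ≤ (∫ x, |f x| * (M / A + ‖x‖ ^ 2) ∂μ) ^ m *
          (∫ x, (M / A + ‖x‖ ^ 2) ^ (-p) ∂μ) ^ (1 - m) :=
        integral_abs_rpow_le_of_weight (fun x => by positivity) hm0 hm1 hfw_int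
          (integrable_add_norm_sq_rpow_neg μ hl hp)
    _ = 2 ^ m * M ^ m * ((M / A) ^ (d * (1 - m) / 2 - m) *
          (∫ x : E, (1 + ‖x‖ ^ 2) ^ (-p) ∂μ) ^ (1 - m)) := by
        rw [hfw, integral_add_norm_sq_rpow_neg μ hl, mul_rpow zero_le_two hM.le,
          mul_rpow (rpow_nonneg hl.le _) (integral_nonneg fun x => rpow_nonneg (by positivity) _),
          ← rpow_mul hl.le, hexp]
    _ = _ := by
        rw [div_rpow hM.le hA.le, div_eq_mul_inv, ← rpow_neg hA.le, neg_sub, hM_split]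
        ring

end

/-- **Generalized Shannon's inequality.** Let `n ≥ 2` and `n/(n+2) < m < 1`, and set
`σ = n(1-m)/(2m)`. There is a constant `C > 0` depending only on `n` such that for every
`f ∈ L¹₂(ℝⁿ)` (i.e. `f` and `|x|² f` integrable),
`∫ |f|^m ≤ C * ‖f‖₁^(m(1-σ)) * (∫ |x|² |f(x)| dx)^(mσ)`. -/
theorem generalized_shannon_inequality (n : ℕ) (hn : 2 ≤ n) (m : ℝ)
    (hm1 : (n : ℝ) / (n + 2) < m) (hm2 : m < 1) :
    ∃ C > 0, ∀ f : EuclideanSpace ℝ (Fin n) → ℝ,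
      Integrable f → Integrable (fun x => ‖x‖ ^ 2 * f x) →
      ∫ x : EuclideanSpace ℝ (Fin n), |f x| ^ m ≤
        C * (∫ x : EuclideanSpace ℝ (Fin n), |f x|) ^ (m * (1 - n * (1 - m) / (2 * m))) *
          (∫ x : EuclideanSpace ℝ (Fin n), ‖x‖ ^ 2 * |f x|) ^ (m * (n * (1 - m) / (2 * m))) := by
  have hm0 : 0 < m := (div_nonneg n.cast_nonneg (by positivity)).trans_lt hm1
  have hp : (finrank ℝ (EuclideanSpace ℝ (Fin n)) : ℝ) < 2 * (m / (1 - m)) := by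
    rw [finrank_euclideanSpace_fin, mul_div_assoc', lt_div_iff₀ (sub_pos.2 hm2)]
    rw [div_lt_iff₀ (by positivity)] at hm1
    linarith
  have hσ : m * (n * (1 - m) / (2 * m)) = n * (1 - m) / 2 := by field_simp
  have h1σ : m * (1 - n * (1 - m) / (2 * m)) = m - n * (1 - m) / 2 := by field_simp
  set I := ∫ x : EuclideanSpace ℝ (Fin n), (1 + ‖x‖ ^ 2) ^ (-(m / (1 - m)))
  have hI : 0 < I := integral_one_add_norm_sq_rpow_neg_pos volume hp
  refine ⟨2 ^ m * I ^ (1 - m), by positivity, fun f hf hf2 => ?_⟩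
  have hf2' : Integrable (fun x => ‖x‖ ^ 2 * |f x|) := by
    simpa only [abs_mul, abs_pow, abs_norm] using hf2.abs
  by_cases hf0 : f =ᵐ[volume] 0
  · rw [integral_eq_zero_of_ae (hf0.mono fun x hx => by simp [hx, zero_rpow hm0.ne'])]
    positivity
  · have : Nontrivial (EuclideanSpace ℝ (Fin n)) :=
      Module.nontrivial_of_finrank_pos (R := ℝ) (by rw [finrank_euclideanSpace_fin]; omega)
    have hA : 0 < ∫ x, |f x| := by
      simpa using integral_mul_abs_pos (g := 1) (ae_of_all _ fun _ => one_pos)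
        (by simpa using hf.abs) hf0
    have hM := integral_mul_abs_pos ((volume.ae_ne 0).mono fun x hx => by positivity) hf2' hf0
    rw [hσ, h1σ]
    simpa only [finrank_euclideanSpace_fin] using
      integral_abs_rpow_le_of_integral_pos volume hm0 hm2 hp hf hf2' hA hM
end

section
/- Let n ≥ 2, (n-2)/n < m < 1, λ = 2 - n(1-m), α = 2mλ/(1-m), and β > 0. Define U(x,t) = (αt/(|x|² + β t^{2/λ}))^{1/(1-m)} for x ∈ ℝ^n and t > 0. Then U solves the fast diffusion equation pointwise: ∂_t U(x,t) = Δ_x (U^m)(x,t) for all x ∈ ℝ^n and t > 0. -/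
/-- The Barenblatt solution `U(x,t) = (αt/(|x|² + β t^(2/λ)))^(1/(1-m))` of the fast
diffusion equation. -/
noncomputable def barenblattSolution (n : ℕ) (m α β lam : ℝ)
    (x : EuclideanSpace ℝ (Fin n)) (t : ℝ) : ℝ :=
  (α * t / (‖x‖ ^ 2 + β * t ^ (2 / lam))) ^ (1 / (1 - m))

/-!
With `q = m/(1-m)` and `B = βt^(2/λ)`, `U^m = (αt)^q (‖x‖² + B)^(-q)` is a function `F` of
`r = ‖x‖²` alone, and the Laplacian of such a function is `4rF''(r) + 2nF'(r)`. Both `∂ₜU` and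
`Δ(U^m)` are then `(αt)^q (r + B)^(-q-2)` times an expression linear in `r` and `B`, and the
values of `α` and `λ` are exactly those for which the two coefficients agree.
-/

open Real

section RadialLaplacian

variable {ι : Type*} [Fintype ι] [DecidableEq ι] {F F' F'' : ℝ → ℝ}

lemma fderiv_comp_norm_sq_apply_single (hF : ∀ r, 0 ≤ r → HasDerivAt F (F' r) r)
    (y : EuclideanSpace ℝ ι) (i : ι) :
    fderiv ℝ (fun z : EuclideanSpace ℝ ι => F (‖z‖ ^ 2)) y (EuclideanSpace.single i 1) =
      F' (‖y‖ ^ 2) * (2 * y i) := by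
  have h : HasFDerivAt (fun z : EuclideanSpace ℝ ι => F (‖z‖ ^ 2))
      (F' (‖y‖ ^ 2) • 2 • innerSL ℝ y) y :=
    (hF _ (by positivity)).comp_hasFDerivAt y (hasStrictFDerivAt_norm_sq y).hasFDerivAt
  rw [h.fderiv]
  simp [EuclideanSpace.inner_single_right]

lemma second_partial_comp_norm_sq (hF : ∀ r, 0 ≤ r → HasDerivAt F (F' r) r)
    (hF' : ∀ r, 0 ≤ r → HasDerivAt F' (F'' r) r) (x : EuclideanSpace ℝ ι) (i : ι) :
    fderiv ℝ (fun y => fderiv ℝ (fun z : EuclideanSpace ℝ ι => F (‖z‖ ^ 2)) y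
        (EuclideanSpace.single i 1)) x (EuclideanSpace.single i 1) =
      4 * x i ^ 2 * F'' (‖x‖ ^ 2) + 2 * F' (‖x‖ ^ 2) := by
  simp_rw [fderiv_comp_norm_sq_apply_single hF]
  have hF'x : HasFDerivAt (fun y : EuclideanSpace ℝ ι => F' (‖y‖ ^ 2))
      (F'' (‖x‖ ^ 2) • 2 • innerSL ℝ x) x :=
    (hF' _ (by positivity)).comp_hasFDerivAt x (hasStrictFDerivAt_norm_sq x).hasFDerivAt
  have hcoord : HasFDerivAt (fun y : EuclideanSpace ℝ ι => 2 * y i)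
      ((2 : ℝ) • EuclideanSpace.proj i) x :=
    (EuclideanSpace.proj (𝕜 := ℝ) i).hasFDerivAt.const_mul (2 : ℝ)
  have hprod : HasFDerivAt (fun y : EuclideanSpace ℝ ι => F' (‖y‖ ^ 2) * (2 * y i)) _ x :=
    hF'x.mul hcoord
  rw [hprod.fderiv]
  simp [EuclideanSpace.inner_single_right]
  ring

lemma laplacian_comp_norm_sq (hF : ∀ r, 0 ≤ r → HasDerivAt F (F' r) r)
    (hF' : ∀ r, 0 ≤ r → HasDerivAt F' (F'' r) r) (x : EuclideanSpace ℝ ι) :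
    ∑ i, fderiv ℝ (fun y => fderiv ℝ (fun z : EuclideanSpace ℝ ι => F (‖z‖ ^ 2)) y
        (EuclideanSpace.single i 1)) x (EuclideanSpace.single i 1) =
      4 * ‖x‖ ^ 2 * F'' (‖x‖ ^ 2) + 2 * Fintype.card ι * F' (‖x‖ ^ 2) := by
  simp_rw [second_partial_comp_norm_sq hF hF', Finset.sum_add_distrib, ← Finset.sum_mul,
    ← Finset.mul_sum, ← EuclideanSpace.real_norm_sq_eq, Finset.sum_const, Finset.card_univ,
    nsmul_eq_mul]
  ring

lemma laplacian_const_mul_rpow_norm_sq_add (K p : ℝ) {b : ℝ} (hb : 0 < b)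
    (x : EuclideanSpace ℝ ι) :
    ∑ i, fderiv ℝ (fun y => fderiv ℝ (fun z : EuclideanSpace ℝ ι => K * (‖z‖ ^ 2 + b) ^ p) y
        (EuclideanSpace.single i 1)) x (EuclideanSpace.single i 1) =
      K * p * (‖x‖ ^ 2 + b) ^ (p - 2) *
        (4 * (p - 1) * ‖x‖ ^ 2 + 2 * Fintype.card ι * (‖x‖ ^ 2 + b)) := by
  have hpos : ∀ r : ℝ, 0 ≤ r → r + b ≠ 0 := fun r hr => by positivity
  have hderiv (q : ℝ) (r : ℝ) (hr : 0 ≤ r) :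
      HasDerivAt (fun s => K * (s + b) ^ q) (K * (q * (r + b) ^ (q - 1))) r := by
    simpa using
      (((hasDerivAt_id r).add_const b).rpow_const (p := q) (Or.inl (hpos r hr))).const_mul K
  have hderiv' (r : ℝ) (hr : 0 ≤ r) : HasDerivAt (fun s => K * (p * (s + b) ^ (p - 1)))
      (K * (p * ((p - 1) * (r + b) ^ (p - 1 - 1)))) r := by
    simpa only [mul_left_comm p] using (hderiv (p - 1) r hr).const_mul p
  rw [laplacian_comp_norm_sq (hderiv p) hderiv']
  have hx := hpos _ (sq_nonneg ‖x‖)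
  rw [show p - 1 - 1 = p - 2 by ring, show p - 1 = p - 2 + 1 by ring, rpow_add_one hx]
  ring

end RadialLaplacian

section Barenblatt

variable {n : ℕ} {m α β lam t : ℝ}

lemma barenblattSolution_rpow (hαt : 0 ≤ α * t) (hβt : 0 ≤ β * t ^ (2 / lam))
    (z : EuclideanSpace ℝ (Fin n)) :
    barenblattSolution n m α β lam z t ^ m =
      (α * t) ^ (m / (1 - m)) * (‖z‖ ^ 2 + β * t ^ (2 / lam)) ^ (-(m / (1 - m))) := by
  have hD : 0 ≤ ‖z‖ ^ 2 + β * t ^ (2 / lam) := by positivity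
  rw [barenblattSolution, ← rpow_mul (div_nonneg hαt hD), one_div_mul_eq_div,
    div_rpow hαt hD, rpow_neg hD, div_eq_mul_inv]

lemma hasDerivAt_barenblattSolution_time (hm : m ≠ 1) (hα : 0 < α) (hβ : 0 < β) (ht : 0 < t)
    (x : EuclideanSpace ℝ (Fin n)) :
    HasDerivAt (fun s => barenblattSolution n m α β lam x s)
      (α / (1 - m) * (α * t) ^ (m / (1 - m)) *
        (‖x‖ ^ 2 + β * t ^ (2 / lam)) ^ (-(m / (1 - m)) - 2) *
        (‖x‖ ^ 2 + (1 - 2 / lam) * (β * t ^ (2 / lam)))) t := by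
  have hD : 0 < ‖x‖ ^ 2 + β * t ^ (2 / lam) := by positivity
  have hαt : 0 < α * t := by positivity
  have hnum : HasDerivAt (fun s => α * s) α t := by simpa using (hasDerivAt_id t).const_mul α
  have hdenom : HasDerivAt (fun s => ‖x‖ ^ 2 + β * s ^ (2 / lam))
      (β * (2 / lam * t ^ (2 / lam - 1))) t :=
    ((hasDerivAt_rpow_const (Or.inl ht.ne')).const_mul β).const_add _
  have hquot : HasDerivAt (fun s => barenblattSolution n m α β lam x s) _ t :=
    (hnum.div hdenom hD.ne').rpow_const (p := 1 / (1 - m)) (Or.inl (div_pos hαt hD).ne')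
  refine hquot.congr_deriv ?_
  have h1m : 1 - m ≠ 0 := sub_ne_zero.mpr hm.symm
  have hDq : (‖x‖ ^ 2 + β * t ^ (2 / lam)) ^ (m / (1 - m)) ≠ 0 := (rpow_pos_of_pos hD _).ne'
  rw [show 1 / (1 - m) - 1 = m / (1 - m) by field_simp; ring, Pi.div_apply, div_rpow hαt.le hD.le,
    rpow_sub hD, rpow_two, rpow_sub_one ht.ne', rpow_neg hD.le]
  field_simp
  ring

end Barenblatt

lemma barenblatt_exponents_pos {n : ℕ} {m lam : ℝ} (hn : 2 ≤ n) (hm : ((n : ℝ) - 2) / n < m)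
    (hlam : lam = 2 - n * (1 - m)) : 0 < m ∧ 0 < lam := by
  have hn' : (2 : ℝ) ≤ n := by exact_mod_cast hn
  have hn0 : (0 : ℝ) < n := by linarith
  refine ⟨(div_nonneg (by linarith) hn0.le).trans_lt hm, ?_⟩
  have := (div_lt_iff₀ hn0).mp hm
  rw [hlam]
  linarith

lemma barenblatt_coefficient_identity {N m lam α r B : ℝ} (hm : m ≠ 1) (hlam0 : lam ≠ 0)
    (hlam : lam = 2 - N * (1 - m)) (hα : α = 2 * m * lam / (1 - m)) :
    α / (1 - m) * (r + (1 - 2 / lam) * B) =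
      -(m / (1 - m)) * (4 * (-(m / (1 - m)) - 1) * r + 2 * N * (r + B)) := by
  have h1m : 1 - m ≠ 0 := sub_ne_zero.mpr hm.symm
  subst hα
  field_simp
  rw [hlam]
  ring

/-- Let `n ≥ 2`, `(n-2)/n < m < 1`, `λ = 2 - n(1-m)`, `α = 2mλ/(1-m)` and `β > 0`. Then the
Barenblatt profile `U(x,t) = (αt/(|x|² + β t^(2/λ)))^(1/(1-m))` solves the fast diffusion
equation pointwise: `∂ₜU(x,t) = Δₓ(U^m)(x,t)` for all `x ∈ ℝⁿ`, `t > 0`, where the Laplacian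
is the sum of repeated second directional derivatives along the standard basis. -/
theorem barenblatt_solves_fast_diffusion (n : ℕ) (hn : 2 ≤ n) (m β lam α : ℝ)
    (hm1 : ((n : ℝ) - 2) / n < m) (hm2 : m < 1) (hβ : 0 < β)
    (hlam : lam = 2 - n * (1 - m)) (hα : α = 2 * m * lam / (1 - m)) :
    ∀ (x : EuclideanSpace ℝ (Fin n)) (t : ℝ), 0 < t →
      deriv (fun s => barenblattSolution n m α β lam x s) t =
        ∑ i : Fin n,
          fderiv ℝ (fun y : EuclideanSpace ℝ (Fin n) =>
              fderiv ℝ (fun z : EuclideanSpace ℝ (Fin n) =>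
                  barenblattSolution n m α β lam z t ^ m) y (EuclideanSpace.single i 1))
            x (EuclideanSpace.single i 1) := by
  intro x t ht
  obtain ⟨hm0, hlam0⟩ := barenblatt_exponents_pos hn hm1 hlam
  have hα0 : 0 < α := by rw [hα]; have := sub_pos.mpr hm2; positivity
  have hB : 0 < β * t ^ (2 / lam) := by positivity
  simp_rw [barenblattSolution_rpow (by positivity : 0 ≤ α * t) hB.le]
  rw [laplacian_const_mul_rpow_norm_sq_add _ _ hB, Fintype.card_fin,
    (hasDerivAt_barenblattSolution_time hm2.ne hα0 hβ ht x).deriv]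
  linear_combination ((α * t) ^ (m / (1 - m)) *
    (‖x‖ ^ 2 + β * t ^ (2 / lam)) ^ (-(m / (1 - m)) - 2)) *
      barenblatt_coefficient_identity (r := ‖x‖ ^ 2) (B := β * t ^ (2 / lam))
        hm2.ne hlam0.ne' hlam hα
end

section
/- (Exponential entropy decay, non-resonant case) Let C > 0 and δ > 0 with δ ≠ 1, and let E : [0,∞) → ℝ be differentiable with E(s) ≥ 0 and E'(s) ≤ -2E(s) + C e^{-δ s} √(E(s)) for all s ≥ 0. Then there exists a constant K > 0, depending only on E(0), C and δ, such that E(s) ≤ K e^{-2 min(1,δ) s} for all s ≥ 0. -/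
/-!
Substituting `H(s) = e^{2s} E(s)` absorbs the damping term: the hypothesis becomes
`H' ≤ C e^{(1-δ)s} √H`, so `√(H + 1)` grows no faster than `C/2 · e^{(1-δ)s}` (the `+ 1` keeps
the square root differentiable where `H` vanishes). Integrating gives
`√(H(s) + 1) ≤ √(E(0) + 1) + C/(2(1-δ)) (e^{(1-δ)s} - 1) ≲ e^{max(0, 1-δ) s}`, and squaring and
undoing the substitution yields the decay rate `e^{-2 min(1,δ) s}`.
-/

open Real Set

theorem sub_le_sub_of_hasDerivAt_le {f g f' g' : ℝ → ℝ} {a b : ℝ} (hab : a ≤ b)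
    (hf : ∀ x ∈ Icc a b, HasDerivAt f (f' x) x) (hg : ∀ x ∈ Icc a b, HasDerivAt g (g' x) x)
    (hle : ∀ x ∈ Ico a b, f' x ≤ g' x) : f b - f a ≤ g b - g a := by
  have hfence := image_le_of_deriv_right_le_deriv_boundary (B := fun x => g x + (f a - g a))
    (fun x hx => (hf x hx).continuousAt.continuousWithinAt)
    (fun x hx => (hf x (Ico_subset_Icc_self hx)).hasDerivWithinAt) (by simp)
    (fun x hx => ((hg x hx).add_const _).continuousAt.continuousWithinAt)
    (fun x hx => ((hg x (Ico_subset_Icc_self hx)).add_const _).hasDerivWithinAt) hle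
    (right_mem_Icc.2 hab)
  linarith

theorem div_two_sqrt_add_one_le {h h' g : ℝ} (hh : 0 ≤ h) (hg : 0 ≤ g) (hle : h' ≤ g * √h) :
    h' / (2 * √(h + 1)) ≤ g / 2 := by
  have hpos : 0 < √(h + 1) := sqrt_pos.2 (by linarith)
  rw [div_le_iff₀ (by positivity)]
  calc h' ≤ g * √h := hle
    _ ≤ g * √(h + 1) := by gcongr; linarith
    _ = g / 2 * (2 * √(h + 1)) := by ring

theorem mul_sub_one_le_abs_mul {c x y : ℝ} (hx : 0 ≤ x) (hxy : x ≤ y) (hy : 1 ≤ y) :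
    c * (x - 1) ≤ |c| * y := by
  rcases le_total 0 c with hc | hc
  · rw [abs_of_nonneg hc]; nlinarith
  · rw [abs_of_nonpos hc]; nlinarith

theorem hasDerivAt_exp_two_mul_mul {E : ℝ → ℝ} {s : ℝ} (hE : DifferentiableAt ℝ E s) :
    HasDerivAt (fun s => exp (2 * s) * E s) (exp (2 * s) * (2 * E s + deriv E s)) s := by
  have hexp : HasDerivAt (fun s => exp (2 * s)) (exp (2 * s) * 2) s :=
    ((hasDerivAt_id s).const_mul 2).exp.congr_deriv (by simp)
  exact (hexp.mul hE.hasDerivAt).congr_deriv (by ring)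

theorem sqrt_exp_two_mul_mul (s e : ℝ) : √(exp (2 * s) * e) = exp s * √e := by
  rw [show exp (2 * s) = exp s ^ 2 by rw [← exp_nat_mul]; norm_num, sqrt_mul (sq_nonneg _),
    sqrt_sq (exp_pos s).le]

theorem le_mul_exp_of_sqrt_exp_two_mul_add_one_le {e A m s : ℝ}
    (h : √(exp (2 * s) * e + 1) ≤ A * exp ((1 - m) * s)) : e ≤ A ^ 2 * exp (-2 * m * s) := by
  have hsq := (sqrt_le_iff.1 h).2
  have hexp : (A * exp ((1 - m) * s)) ^ 2 = exp (2 * s) * (A ^ 2 * exp (-2 * m * s)) := by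
    rw [mul_pow, sq (exp _), ← exp_add, mul_left_comm, ← exp_add]
    ring_nf
  exact le_of_mul_le_mul_left (by linarith) (exp_pos (2 * s))

theorem sqrt_exp_two_mul_add_one_le {C δ : ℝ} (hC : 0 ≤ C) (hδ1 : δ ≠ 1) {E : ℝ → ℝ}
    (hEd : ∀ s ≥ (0 : ℝ), DifferentiableAt ℝ E s) (hEnn : ∀ s ≥ (0 : ℝ), 0 ≤ E s)
    (hineq : ∀ s ≥ (0 : ℝ), deriv E s ≤ -2 * E s + C * exp (-δ * s) * √(E s))
    {s : ℝ} (hs : 0 ≤ s) :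
    √(exp (2 * s) * E s + 1) ≤ √(E 0 + 1) + C / (2 * (1 - δ)) * (exp ((1 - δ) * s) - 1) := by
  have hHderiv_le : ∀ x ≥ (0 : ℝ),
      exp (2 * x) * (2 * E x + deriv E x) ≤ C * exp ((1 - δ) * x) * √(exp (2 * x) * E x) := by
    intro x hx
    calc exp (2 * x) * (2 * E x + deriv E x)
        ≤ exp (2 * x) * (C * exp (-δ * x) * √(E x)) := by gcongr; linarith [hineq x hx]
      _ = C * exp ((1 - δ) * x) * √(exp (2 * x) * E x) := by
        rw [sqrt_exp_two_mul_mul, show (1 - δ) * x = 2 * x + -δ * x + -x by ring, exp_add,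
          exp_add, exp_neg]
        field_simp
  have hg : ∀ x, HasDerivAt (fun x => C / (2 * (1 - δ)) * exp ((1 - δ) * x))
      (C * exp ((1 - δ) * x) / 2) x := by
    intro x
    have h1δ : 1 - δ ≠ 0 := sub_ne_zero.2 hδ1.symm
    exact (((hasDerivAt_id' x).const_mul (1 - δ)).exp.const_mul (C / (2 * (1 - δ)))).congr_deriv
      (by field_simp)
  have hcompare := sub_le_sub_of_hasDerivAt_le (f := fun x => √(exp (2 * x) * E x + 1)) hs
    (fun x hx => ((hasDerivAt_exp_two_mul_mul (hEd x hx.1)).add_const 1).sqrt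
      (by have := hEnn x hx.1; positivity))
    (fun x _ => hg x)
    (fun x hx => div_two_sqrt_add_one_le (by have := hEnn x hx.1; positivity)
      (by positivity) (hHderiv_le x hx.1))
  simp only [mul_zero, exp_zero, one_mul] at hcompare
  linarith

theorem entropy_decay_nonresonant_general (C δ : ℝ) (hC : 0 < C) (hδ1 : δ ≠ 1)
    (E : ℝ → ℝ) (hEd : ∀ s ≥ (0 : ℝ), DifferentiableAt ℝ E s)
    (hEnn : ∀ s ≥ (0 : ℝ), 0 ≤ E s)
    (hineq : ∀ s ≥ (0 : ℝ), deriv E s ≤ -2 * E s + C * Real.exp (-δ * s) * Real.sqrt (E s)) :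
    ∃ K > 0, ∀ s ≥ (0 : ℝ), E s ≤ K * Real.exp (-2 * min 1 δ * s) := by
  set c := C / (2 * (1 - δ))
  have hE0 : 0 < √(E 0 + 1) := sqrt_pos.2 (by linarith [hEnn 0 le_rfl])
  refine ⟨(√(E 0 + 1) + |c|) ^ 2, by positivity, fun s hs => ?_⟩
  apply le_mul_exp_of_sqrt_exp_two_mul_add_one_le
  have hm : 0 ≤ (1 - min 1 δ) * s := mul_nonneg (sub_nonneg.2 (min_le_left 1 δ)) hs
  have hδm : (1 - δ) * s ≤ (1 - min 1 δ) * s := by gcongr; exact min_le_right 1 δ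
  calc √(exp (2 * s) * E s + 1) ≤ √(E 0 + 1) + c * (exp ((1 - δ) * s) - 1) :=
        sqrt_exp_two_mul_add_one_le hC.le hδ1 hEd hEnn hineq hs
    _ ≤ √(E 0 + 1) * exp ((1 - min 1 δ) * s) + |c| * exp ((1 - min 1 δ) * s) :=
        add_le_add (le_mul_of_one_le_right hE0.le (one_le_exp hm))
          (mul_sub_one_le_abs_mul (exp_pos _).le (exp_le_exp.2 hδm) (one_le_exp hm))
    _ = (√(E 0 + 1) + |c|) * exp ((1 - min 1 δ) * s) := by ring

/-- **Exponential entropy decay, non-resonant case.** If `C > 0`, `δ > 0`, `δ ≠ 1`, and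
`E : [0,∞) → ℝ` is differentiable and nonnegative with
`E'(s) ≤ -2E(s) + C e^(-δs) √(E(s))` for all `s ≥ 0`, then there exists `K > 0`, depending
only on `E(0)`, `C` and `δ`, with `E(s) ≤ K e^(-2 min(1,δ) s)` for all `s ≥ 0`. -/
theorem entropy_decay_nonresonant (C δ : ℝ) (hC : 0 < C) (hδ : 0 < δ) (hδ1 : δ ≠ 1)
    (E : ℝ → ℝ) (hEd : ∀ s ≥ (0 : ℝ), DifferentiableAt ℝ E s)
    (hEnn : ∀ s ≥ (0 : ℝ), 0 ≤ E s)
    (hineq : ∀ s ≥ (0 : ℝ), deriv E s ≤ -2 * E s + C * Real.exp (-δ * s) * Real.sqrt (E s)) :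
    ∃ K > 0, ∀ s ≥ (0 : ℝ), E s ≤ K * Real.exp (-2 * min 1 δ * s) :=
  entropy_decay_nonresonant_general C δ hC hδ1 E hEd hEnn hineq
end
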